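/- In the setting of the flat-interpolation construction (one neuron per nonzero-label example, each active on exactly one patch), with reparameterized unit output weights $|v_i| = 1$ and pre-activation $z_i = J|y_i|$ at the anchor patch, at the interpolating parameter $\theta$ the loss Hessian equals the Gauss–Newton part: $\nabla^2_{\theta}\mathcal{L} = \frac{1}{n}\sum_{i=1}^n \nabla_{\theta} f_{\theta}(x_i) \nabla_{\theta} f_{\theta}(x_i)^{\mathsf{T}}$, and it satisfies $\lambda_{\max}(\nabla^2_{\theta}\mathcal{L}) \le 1 + \frac{D^2 + 2/J^2}{n}$. -/

import Mathlib

open scoped RealInnerProductSpace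

/-- Parameter space of a two-layer locally connected ReLU network with weight
sharing (`K` filters in `ℝ^m`, biases, output weights, output bias), with the
Euclidean (ℓ²) norm. -/
abbrev LCNParam (K m : ℕ) : Type :=
  EuclideanSpace ℝ ((Fin K × Fin m) ⊕ Fin K ⊕ Fin K ⊕ Unit)

/-- The network `f_θ(x) = ∑_k (v_k/J) ∑_j φ(w_kᵀ π_j(x) - b_k) + β`. -/
noncomputable def lcnNet {K m d J : ℕ} (π : Fin J → Fin m → Fin d)
    (θ : LCNParam K m) (x : EuclideanSpace ℝ (Fin d)) : ℝ :=
  (∑ k : Fin K, θ (Sum.inr (Sum.inr (Sum.inl k))) / (J : ℝ) *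
      ∑ j : Fin J,
        max (∑ i : Fin m, θ (Sum.inl (k, i)) * x (π j i) -
          θ (Sum.inr (Sum.inl k))) 0) +
    θ (Sum.inr (Sum.inr (Sum.inr ())))

/-!
At an interpolating parameter the residuals vanish, so the Hessian of the squared loss reduces
to its Gauss–Newton part `(1/n) ∑ ∇f(xᵢ) ∇f(xᵢ)ᵀ` as soon as every `θ ↦ f_θ(xᵢ)` is `C²` near
`θ`. Here no patch sits on an activation boundary, so near `θ` the network agrees with the
smooth function `β + ∑_{(k,j) active} (v_k/J) z_{kj}`. The gradient of `f_θ(x_ℓ)` is therefore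
`e_β` plus a vector supported on the block `(w_ℓ, b_ℓ, v_ℓ)` of neuron `ℓ`, of squared norm
`(‖anchor patch‖² + 1)/J² + (z_ℓ/J)² ≤ 2/J² + D²`. Since these blocks are disjoint, Young's
inequality bounds the Gauss–Newton form by `1 + (D² + 2/J²)/n` on unit vectors.
-/

open Filter Topology

theorem iteratedFDeriv_two_mul_sum_sq_sub_of_eq {E ι : Type*} [NormedAddCommGroup E]
    [NormedSpace ℝ E] [Fintype ι] {f : ι → E → ℝ} {y : ι → ℝ} {θ : E}
    (hf : ∀ i, ContDiffAt ℝ 2 (f i) θ) (hθ : ∀ i, f i θ = y i) (c : ℝ) (ω : E) :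
    iteratedFDeriv ℝ 2 (fun θ' => c * ∑ i, (f i θ' - y i) ^ 2) θ ![ω, ω] =
      2 * c * ∑ i, fderiv ℝ (f i) θ ω ^ 2 := by
  have hfirst : fderiv ℝ (fun θ' => c * ∑ i, (f i θ' - y i) ^ 2) =ᶠ[𝓝 θ]
      fun θ' => c • ∑ i, (2 * (f i θ' - y i)) • fderiv ℝ (f i) θ' := by
    have hdiff : ∀ᶠ θ' in 𝓝 θ, ∀ i, DifferentiableAt ℝ (f i) θ' :=
      eventually_all.2 fun i => ((hf i).eventually (by simp)).mono fun θ' h =>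
        h.differentiableAt (by simp)
    filter_upwards [hdiff] with θ' h
    refine HasFDerivAt.fderiv ?_
    simpa using (HasFDerivAt.fun_sum (u := Finset.univ) fun i _ =>
      (((h i).hasFDerivAt.sub_const (y i)).pow 2 :
        HasFDerivAt (fun θ' => (f i θ' - y i) ^ 2) _ θ')).const_mul c
  have hsecond : ∀ i, HasFDerivAt (fun θ' => (2 * (f i θ' - y i)) • fderiv ℝ (f i) θ')
      (((2 : ℝ) • fderiv ℝ (f i) θ).smulRight (fderiv ℝ (f i) θ)) θ := by
    intro i
    have h1 := ((hf i).differentiableAt (by simp)).hasFDerivAt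
    have h2 := (((hf i).fderiv_right (m := 1) (by norm_num)).differentiableAt
      (by simp)).hasFDerivAt
    simpa [hθ] using ((h1.sub_const (y i)).const_mul 2).fun_smul h2
  rw [iteratedFDeriv_two_apply, hfirst.fderiv_eq,
    ((HasFDerivAt.fun_sum fun i _ => hsecond i).fun_const_smul c).fderiv]
  simp only [Fin.isValue, Matrix.cons_val_zero, Matrix.cons_val_one, Matrix.cons_val_fin_one,
    smul_apply, sum_apply, ContinuousLinearMap.smulRight_apply, smul_eq_mul, Finset.mul_sum]
  exact Finset.sum_congr rfl fun i _ => by ring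

theorem sum_sq_const_add_le {ι : Type*} [Fintype ι] (hι : 0 < Fintype.card ι) {C : ℝ}
    (hC : 0 < C) (β : ℝ) {u r : ι → ℝ} (hu : ∀ i, u i ^ 2 ≤ C * r i) :
    ∑ i, (β + u i) ^ 2 ≤ (Fintype.card ι + C) * (β ^ 2 + ∑ i, r i) := by
  set N : ℝ := (Fintype.card ι : ℝ)
  have hN : 0 < N := by positivity
  -- Young's inequality `(β + u)² ≤ (1 + C/N) β² + (1 + N/C) u²`, multiplied by `N C`
  have hyoung : ∀ i, N * C * (β + u i) ^ 2 ≤ C * (N + C) * β ^ 2 + N * (N + C) * u i ^ 2 :=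
    fun i => by nlinarith [sq_nonneg (C * β - N * u i)]
  have hsum : N * C * ∑ i, (β + u i) ^ 2 ≤ N * C * ((N + C) * (β ^ 2 + ∑ i, r i)) :=
    calc N * C * ∑ i, (β + u i) ^ 2
        ≤ ∑ i, (C * (N + C) * β ^ 2 + N * (N + C) * u i ^ 2) := by
          rw [Finset.mul_sum]
          exact Finset.sum_le_sum fun i _ => hyoung i
      _ = N * C * (N + C) * β ^ 2 + N * (N + C) * ∑ i, u i ^ 2 := by
          rw [Finset.sum_add_distrib, Finset.sum_const, Finset.card_univ, nsmul_eq_mul,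
            Finset.mul_sum]
          ring
      _ ≤ N * C * (N + C) * β ^ 2 + N * (N + C) * (C * ∑ i, r i) := by
          gcongr
          rw [Finset.mul_sum]
          exact Finset.sum_le_sum fun i _ => hu i
      _ = N * C * ((N + C) * (β ^ 2 + ∑ i, r i)) := by ring
  exact le_of_mul_le_mul_left hsum (by positivity)

theorem sq_sum_mul_add_le {m : ℕ} (a w : Fin m → ℝ) (b c p q : ℝ) :
    (∑ i, a i * w i + b * p + c * q) ^ 2 ≤
      (∑ i, a i ^ 2 + b ^ 2 + c ^ 2) * (∑ i, w i ^ 2 + p ^ 2 + q ^ 2) := by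
  simpa [Fintype.sum_sum_type, Fin.sum_univ_two, add_assoc] using
    Finset.sum_mul_sq_le_sq_mul_sq Finset.univ (Sum.elim a ![b, c]) (Sum.elim w ![p, q])

namespace LCNParam

variable {K m d J : ℕ}

noncomputable def outWeight (k : Fin K) : LCNParam K m →L[ℝ] ℝ :=
  EuclideanSpace.proj (Sum.inr (Sum.inr (Sum.inl k)))

noncomputable def outBias : LCNParam K m →L[ℝ] ℝ :=
  EuclideanSpace.proj (Sum.inr (Sum.inr (Sum.inr ())))

noncomputable def preact (π : Fin J → Fin m → Fin d) (xv : EuclideanSpace ℝ (Fin d))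
    (k : Fin K) (j : Fin J) : LCNParam K m →L[ℝ] ℝ :=
  ∑ i, xv (π j i) • EuclideanSpace.proj (Sum.inl (k, i)) -
    EuclideanSpace.proj (Sum.inr (Sum.inl k))

def blockNormSq (ω : LCNParam K m) (k : Fin K) : ℝ :=
  ∑ i, ω (Sum.inl (k, i)) ^ 2 + ω (Sum.inr (Sum.inl k)) ^ 2 +
    ω (Sum.inr (Sum.inr (Sum.inl k))) ^ 2

@[simp] lemma outWeight_apply (k : Fin K) (θ : LCNParam K m) :
    outWeight k θ = θ (Sum.inr (Sum.inr (Sum.inl k))) := rfl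

@[simp] lemma outBias_apply (θ : LCNParam K m) :
    outBias θ = θ (Sum.inr (Sum.inr (Sum.inr ()))) := rfl

@[simp] lemma preact_apply (π : Fin J → Fin m → Fin d) (xv : EuclideanSpace ℝ (Fin d))
    (k : Fin K) (j : Fin J) (θ : LCNParam K m) :
    preact π xv k j θ = ∑ i, θ (Sum.inl (k, i)) * xv (π j i) - θ (Sum.inr (Sum.inl k)) := by
  simp [preact, mul_comm]

lemma blockNormSq_nonneg (ω : LCNParam K m) (k : Fin K) : 0 ≤ blockNormSq ω k := by
  unfold blockNormSq
  positivity

lemma norm_sq_eq (ω : LCNParam K m) :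
    ‖ω‖ ^ 2 = outBias ω ^ 2 + ∑ k, blockNormSq ω k := by
  simp only [EuclideanSpace.norm_sq_eq, Real.norm_eq_abs, sq_abs, Fintype.sum_sum_type,
    Fintype.sum_prod_type, Finset.univ_unique, Finset.sum_singleton, blockNormSq,
    Finset.sum_add_distrib, outBias_apply]
  ring

end LCNParam

open LCNParam

section LocalModel

variable {K m d J : ℕ}

noncomputable def neuronOut (π : Fin J → Fin m → Fin d) (xv : EuclideanSpace ℝ (Fin d))
    (k : Fin K) (j : Fin J) (θ : LCNParam K m) : ℝ :=
  outWeight k θ / J * preact π xv k j θ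

noncomputable def activeNet (π : Fin J → Fin m → Fin d) (A : Finset (Fin K × Fin J))
    (xv : EuclideanSpace ℝ (Fin d)) (θ : LCNParam K m) : ℝ :=
  ∑ p ∈ A, neuronOut π xv p.1 p.2 θ + outBias θ

lemma lcnNet_eq_activeNet (π : Fin J → Fin m → Fin d) {A : Finset (Fin K × Fin J)}
    {xv : EuclideanSpace ℝ (Fin d)} {θ : LCNParam K m}
    (hA : ∀ k j, (k, j) ∈ A → 0 ≤ preact π xv k j θ)
    (hAc : ∀ k j, (k, j) ∉ A → preact π xv k j θ ≤ 0) :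
    lcnNet π θ xv = activeNet π A xv θ := by
  have hrelu : ∀ k j, max (preact π xv k j θ) 0 =
      if (k, j) ∈ A then preact π xv k j θ else 0 := by
    intro k j
    split_ifs with h
    exacts [max_eq_left (hA k j h), max_eq_right (hAc k j h)]
  simp only [preact_apply] at hrelu
  rw [lcnNet, activeNet]
  congr 1
  rw [← Finset.univ_inter A, ← Finset.sum_ite_mem, Fintype.sum_prod_type]
  refine Finset.sum_congr rfl fun k _ => ?_
  rw [Finset.mul_sum]
  refine Finset.sum_congr rfl fun j _ => ?_
  rw [hrelu, mul_ite, mul_zero, neuronOut, outWeight_apply, preact_apply]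

theorem lcnNet_eventuallyEq_activeNet (π : Fin J → Fin m → Fin d)
    {A : Finset (Fin K × Fin J)} {xv : EuclideanSpace ℝ (Fin d)} {θ : LCNParam K m}
    (hA : ∀ k j, (k, j) ∈ A ↔ 0 < preact π xv k j θ) (hne : ∀ k j, preact π xv k j θ ≠ 0) :
    (fun θ' => lcnNet π θ' xv) =ᶠ[𝓝 θ] activeNet π A xv := by
  have hsign : ∀ k j, ∀ᶠ θ' in 𝓝 θ, ((k, j) ∈ A → 0 < preact π xv k j θ') ∧
      ((k, j) ∉ A → preact π xv k j θ' < 0) := by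
    intro k j
    have hc := (preact π xv k j).continuous.continuousAt (x := θ)
    by_cases h : (k, j) ∈ A
    · filter_upwards [hc.eventually (lt_mem_nhds ((hA k j).1 h))] with θ' h'
      exact ⟨fun _ => h', fun h'' => absurd h h''⟩
    · filter_upwards [hc.eventually (gt_mem_nhds ((hne k j).lt_of_le
        (not_lt.1 (mt (hA k j).2 h))))] with θ' h'
      exact ⟨fun h'' => absurd h'' h, fun _ => h'⟩
  filter_upwards [eventually_all.2 fun k => eventually_all.2 (hsign k)] with θ' h
  exact lcnNet_eq_activeNet π (fun k j hk => ((h k j).1 hk).le)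
    fun k j hk => ((h k j).2 hk).le

theorem contDiff_activeNet (π : Fin J → Fin m → Fin d) (A : Finset (Fin K × Fin J))
    (xv : EuclideanSpace ℝ (Fin d)) {n : WithTop ℕ∞} : ContDiff ℝ n (activeNet π A xv) := by
  unfold activeNet neuronOut
  fun_prop

lemma fderiv_neuronOut_apply (π : Fin J → Fin m → Fin d) (xv : EuclideanSpace ℝ (Fin d))
    (k : Fin K) (j : Fin J) (θ ω : LCNParam K m) :
    fderiv ℝ (neuronOut π xv k j) θ ω =
      (outWeight k θ * preact π xv k j ω + preact π xv k j θ * outWeight k ω) / J := by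
  have hfun : neuronOut π xv k j =
      fun θ => (J : ℝ)⁻¹ * (outWeight k θ * preact π xv k j θ) := by
    funext θ
    rw [neuronOut, div_eq_inv_mul, mul_assoc]
  rw [hfun, ((((outWeight k).hasFDerivAt (x := θ)).fun_mul
    (preact π xv k j).hasFDerivAt).const_mul _).fderiv]
  simp only [smul_add, add_apply, smul_apply, smul_eq_mul]
  ring

lemma fderiv_activeNet_apply (π : Fin J → Fin m → Fin d) (A : Finset (Fin K × Fin J))
    (xv : EuclideanSpace ℝ (Fin d)) (θ ω : LCNParam K m) :
    fderiv ℝ (activeNet π A xv) θ ω =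
      ∑ p ∈ A, fderiv ℝ (neuronOut π xv p.1 p.2) θ ω + outBias ω := by
  have hd : ∀ p : Fin K × Fin J, DifferentiableAt ℝ (neuronOut π xv p.1 p.2) θ := fun p => by
    unfold neuronOut
    fun_prop
  have := (HasFDerivAt.fun_sum (u := A) fun p _ => (hd p).hasFDerivAt).fun_add
    (outBias.hasFDerivAt (x := θ))
  rw [HasFDerivAt.fderiv (f := activeNet π A xv) this]
  simp

theorem fderiv_neuronOut_sq_le (π : Fin J → Fin m → Fin d) {xv : EuclideanSpace ℝ (Fin d)}
    {k : Fin K} {j : Fin J} {θ : LCNParam K m} (hv : |outWeight k θ| = 1)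
    (hx : ∑ i, xv (π j i) ^ 2 = 1) (ω : LCNParam K m) :
    fderiv ℝ (neuronOut π xv k j) θ ω ^ 2 ≤
      (2 / (J : ℝ) ^ 2 + (preact π xv k j θ / J) ^ 2) * blockNormSq ω k := by
  have hv2 : outWeight k θ ^ 2 = 1 := by rw [← sq_abs, hv, one_pow]
  have hcs := sq_sum_mul_add_le (fun i => outWeight k θ / J * xv (π j i))
    (fun i => ω (Sum.inl (k, i))) (-(outWeight k θ / J)) (preact π xv k j θ / J)
    (ω (Sum.inr (Sum.inl k))) (ω (Sum.inr (Sum.inr (Sum.inl k))))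
  have hsum : ∑ i, outWeight k θ / J * xv (π j i) * ω (Sum.inl (k, i)) =
      outWeight k θ / J * ∑ i, ω (Sum.inl (k, i)) * xv (π j i) := by
    rw [Finset.mul_sum]
    exact Finset.sum_congr rfl fun i _ => by ring
  convert hcs using 2
  · rw [hsum, fderiv_neuronOut_apply, preact_apply _ _ _ _ ω, outWeight_apply _ ω]
    ring
  · simp only [mul_pow, div_pow, ← Finset.mul_sum, hx, neg_sq, hv2]
    ring
  · rfl

end LocalModel

noncomputable def anchorSet {n J : ℕ} (y : Fin n → ℝ) (τ : Fin n → Fin J) (ℓ : Fin n) :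
    Finset (Fin n × Fin J) :=
  if y ℓ = 0 then ∅ else {(ℓ, τ ℓ)}

lemma mem_anchorSet {n J : ℕ} {y : Fin n → ℝ} {τ : Fin n → Fin J} {ℓ k : Fin n}
    {j : Fin J} :
    (k, j) ∈ anchorSet y τ ℓ ↔ y k ≠ 0 ∧ ℓ = k ∧ j = τ k := by
  unfold anchorSet
  split_ifs with h <;> aesop

theorem sum_anchorSet_fderiv_neuronOut_sq_le {n m d J : ℕ} (hJ : 0 < J)
    (π : Fin J → Fin m → Fin d) (x : Fin n → EuclideanSpace ℝ (Fin d)) {y : Fin n → ℝ}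
    {τ : Fin n → Fin J} {θ : LCNParam n m} {D : ℝ} {ℓ : Fin n} (hy : |y ℓ| ≤ D)
    (hv : |outWeight ℓ θ| = 1) (hpre : y ℓ ≠ 0 → preact π (x ℓ) ℓ (τ ℓ) θ = J * |y ℓ|)
    (hanchor : y ℓ ≠ 0 → ∑ i, x ℓ (π (τ ℓ) i) ^ 2 = 1) (ω : LCNParam n m) :
    (∑ p ∈ anchorSet y τ ℓ, fderiv ℝ (neuronOut π (x ℓ) p.1 p.2) θ ω) ^ 2 ≤
      (D ^ 2 + 2 / (J : ℝ) ^ 2) * blockNormSq ω ℓ := by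
  by_cases hyℓ : y ℓ = 0
  · simp only [anchorSet, hyℓ, if_true, Finset.sum_empty]
    rw [zero_pow two_ne_zero]
    exact mul_nonneg (by positivity) (blockNormSq_nonneg ω ℓ)
  · simp only [anchorSet, hyℓ, if_false, Finset.sum_singleton]
    refine (fderiv_neuronOut_sq_le π hv (hanchor hyℓ) ω).trans ?_
    gcongr ?_ * _
    · exact blockNormSq_nonneg ω ℓ
    rw [hpre hyℓ, mul_div_cancel_left₀ _ (by positivity), sq_abs]
    linarith [sq_le_sq' (neg_le_of_abs_le hy) (le_of_abs_le hy)]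

/-- Flat interpolation: at the constructed interpolating parameter (one neuron
per nonzero-label example, each active on exactly one patch, unit output
weights, pre-activation `J|y_k|` at the unit-norm anchor patch), the loss
Hessian equals its Gauss–Newton part and
`λ_max(∇²L) ≤ 1 + (D² + 2/J²)/n`, both stated via quadratic forms over unit
vectors. -/
theorem stmt_18 (n m d J : ℕ) (hn : 0 < n) (hJ : 0 < J)
    (π : Fin J → Fin m → Fin d)
    (x : Fin n → EuclideanSpace ℝ (Fin d)) (y : Fin n → ℝ)
    (D : ℝ) (hy : ∀ i, |y i| ≤ D)
    (θ : LCNParam n m)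
    -- unit output weights after the 1-homogeneity reparameterization
    (hv : ∀ k : Fin n, |θ (Sum.inr (Sum.inr (Sum.inl k)))| = 1)
    -- neuron k is active exactly on the anchor patch (k, τ k) of a
    -- nonzero-label example
    (τ : Fin n → Fin J)
    (hact : ∀ k ℓ : Fin n, ∀ j : Fin J,
      ((∑ i : Fin m, θ (Sum.inl (k, i)) * x ℓ (π j i)) >
          θ (Sum.inr (Sum.inl k)))
        ↔ (y k ≠ 0 ∧ ℓ = k ∧ j = τ k))
    -- no patch sits exactly on an activation boundary
    (hstrict : ∀ k ℓ : Fin n, ∀ j : Fin J,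
      (∑ i : Fin m, θ (Sum.inl (k, i)) * x ℓ (π j i)) ≠
        θ (Sum.inr (Sum.inl k)))
    -- pre-activation `z_k = J * |y_k|` at the anchor patch
    (hpre : ∀ k : Fin n, y k ≠ 0 →
      (∑ i : Fin m, θ (Sum.inl (k, i)) * x k (π (τ k) i)) -
          θ (Sum.inr (Sum.inl k)) = (J : ℝ) * |y k|)
    -- anchor patches have unit norm
    (hanchor : ∀ k : Fin n, y k ≠ 0 → ∑ i : Fin m, (x k (π (τ k) i)) ^ 2 = 1)
    -- θ interpolates the data
    (hinterp : ∀ ℓ : Fin n, lcnNet π θ (x ℓ) = y ℓ)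
    (L : LCNParam n m → ℝ)
    (hL : L = fun θ' => (1 / (2 * (n : ℝ))) * ∑ i, (lcnNet π θ' (x i) - y i) ^ 2) :
    ∀ ω : LCNParam n m, ‖ω‖ = 1 →
      iteratedFDeriv ℝ 2 L θ ![ω, ω] =
        (1 / (n : ℝ)) *
          ∑ i, ⟪gradient (fun θ' => lcnNet π θ' (x i)) θ, ω⟫ ^ 2 ∧
      iteratedFDeriv ℝ 2 L θ ![ω, ω] ≤
        1 + (D ^ 2 + 2 / (J : ℝ) ^ 2) / (n : ℝ) := by
  intro ω hω
  have hlocal : ∀ ℓ,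
      (fun θ' => lcnNet π θ' (x ℓ)) =ᶠ[𝓝 θ] activeNet π (anchorSet y τ ℓ) (x ℓ) :=
    fun ℓ => lcnNet_eventuallyEq_activeNet π
      (fun k j => by rw [mem_anchorSet, preact_apply, sub_pos, ← gt_iff_lt, hact])
      (fun k j => by rw [preact_apply, sub_ne_zero]; exact hstrict k ℓ j)
  have hhess : iteratedFDeriv ℝ 2 L θ ![ω, ω] =
      1 / n * ∑ ℓ, fderiv ℝ (fun θ' => lcnNet π θ' (x ℓ)) θ ω ^ 2 := by
    rw [hL, iteratedFDeriv_two_mul_sum_sq_sub_of_eq (fun ℓ =>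
      (contDiff_activeNet π _ _).contDiffAt.congr_of_eventuallyEq (hlocal ℓ)) hinterp]
    ring
  have hderiv : ∀ ℓ, fderiv ℝ (fun θ' => lcnNet π θ' (x ℓ)) θ ω =
      outBias ω + ∑ p ∈ anchorSet y τ ℓ, fderiv ℝ (neuronOut π (x ℓ) p.1 p.2) θ ω :=
    fun ℓ => by rw [(hlocal ℓ).fderiv_eq, fderiv_activeNet_apply, add_comm]
  refine ⟨by simp only [hhess, InnerProductSpace.toDual_symm_apply, gradient], ?_⟩
  calc iteratedFDeriv ℝ 2 L θ ![ω, ω]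
      ≤ 1 / n * ((n + (D ^ 2 + 2 / (J : ℝ) ^ 2)) *
          (outBias ω ^ 2 + ∑ ℓ, blockNormSq ω ℓ)) := by
        rw [hhess]
        gcongr
        simp only [hderiv]
        simpa using sum_sq_const_add_le (by simpa using hn) (by positivity) (outBias ω)
          fun ℓ => sum_anchorSet_fderiv_neuronOut_sq_le hJ π x (hy ℓ) (hv ℓ)
            (fun h => by rw [preact_apply, hpre ℓ h]) (hanchor ℓ) ω
    _ = 1 + (D ^ 2 + 2 / (J : ℝ) ^ 2) / n := by
        rw [← norm_sq_eq, hω]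
        field_simp
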